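/- For the model autocorrelation ρ̂(k) = ∑_{i=1}^m A_i·τ_i^k with 0 ≤ τ_i < 1 and ∑ A_i = 1, the quantity s·ε̂_s², where ε̂_s² = (σ̂²/s)·[1 + 2·∑_{k=1}^{s−1}(1 − k/s)·ρ̂(k)], converges as s → ∞ to the finite limit Q̂ = σ̂²·[1 + 2·∑_{i=1}^m A_i·τ_i/(1 − τ_i)]. -/

import Mathlib

open Filter Finset Topology

/-!
Up to the factor `σ̂²`, `s · ε̂_s²` is `1 + 2 ∑_{k=1}^{s-1} (1 - k/s) ρ̂(k)`, i.e. a Fejér mean of the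
series `∑ ρ̂(k)` with its `k = 0` term removed. Fejér means are the Cesàro averages of the partial
sums, so they converge to the sum of the series, here `∑_k ρ̂(k) = ∑ A_i / (1 - τ_i)`; removing
`ρ̂(0) = ∑ A_i` leaves `∑ A_i τ_i / (1 - τ_i)`.
-/

section Fejer

variable {E : Type*} [NormedAddCommGroup E] [NormedSpace ℝ E]

theorem sum_range_partialSums_eq_sum_smul (f : ℕ → E) (s : ℕ) :
    ∑ j ∈ range s, ∑ k ∈ range (j + 1), f k = ∑ k ∈ range s, ((s : ℝ) - k) • f k := by
  induction s with
  | zero => simp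
  | succ s ih =>
    have hcoeff : ∀ k : ℕ, (((s + 1 : ℕ) : ℝ) - k) • f k = ((s : ℝ) - k) • f k + f k := by
      intro k
      rw [Nat.cast_succ, add_sub_right_comm, add_smul, one_smul]
    rw [sum_range_succ, ih, sum_congr rfl fun k _ => hcoeff k, sum_add_distrib,
      sum_range_succ (fun k => ((s : ℝ) - k) • f k), sub_self, zero_smul, add_zero]

theorem HasSum.tendsto_sum_range_one_sub_div_smul {f : ℕ → E} {a : E} (hf : HasSum f a) :
    Tendsto (fun s : ℕ => ∑ k ∈ range s, (1 - (k : ℝ) / s) • f k) atTop (𝓝 a) := by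
  have hcesaro := ((tendsto_add_atTop_iff_nat 1).2 hf.tendsto_sum_nat).cesaro_smul
  refine hcesaro.congr' ?_
  filter_upwards [eventually_ne_atTop 0] with s hs
  have hs' : (s : ℝ) ≠ 0 := Nat.cast_ne_zero.2 hs
  rw [sum_range_partialSums_eq_sum_smul, smul_sum]
  refine sum_congr rfl fun k _ => ?_
  rw [smul_smul]
  congr 1
  field_simp

theorem HasSum.tendsto_sum_Icc_one_sub_div_smul {f : ℕ → E} {a : E} (hf : HasSum f a) :
    Tendsto (fun s : ℕ => ∑ k ∈ Icc 1 (s - 1), (1 - (k : ℝ) / s) • f k) atTop (𝓝 (a - f 0)) := by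
  refine (hf.tendsto_sum_range_one_sub_div_smul.sub_const (f 0)).congr' ?_
  filter_upwards [eventually_gt_atTop 0] with s hs
  obtain ⟨n, rfl⟩ := Nat.exists_eq_add_one_of_ne_zero hs.ne'
  rw [range_eq_Ico, sum_eq_sum_Ico_succ_bot hs, Nat.zero_add, Ico_add_one_right_eq_Icc,
    Nat.add_sub_cancel, Nat.cast_zero, zero_div, sub_zero, one_smul, add_sub_cancel_left]

end Fejer

theorem hasSum_sum_mul_pow {m : ℕ} (A τ : Fin m → ℝ) (hτ : ∀ i, |τ i| < 1) :
    HasSum (fun k : ℕ => ∑ i, A i * τ i ^ k) (∑ i, A i * (1 - τ i)⁻¹) :=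
  hasSum_sum fun i _ => (hasSum_geometric_of_abs_lt_one (hτ i)).mul_left (A i)

theorem stmt4_general
    (σh : ℝ) (m : ℕ) (A τ : Fin m → ℝ)
    (hτ : ∀ i, 0 ≤ τ i ∧ τ i < 1) :
    Tendsto
      (fun s : ℕ => (s : ℝ) *
        (σh ^ 2 / s * (1 + 2 * ∑ k ∈ Finset.Icc 1 (s - 1),
          (1 - (k : ℝ) / s) * (∑ i, A i * τ i ^ k))))
      atTop (nhds (σh ^ 2 * (1 + 2 * ∑ i, A i * (τ i / (1 - τ i))))) := by
  have hρ := hasSum_sum_mul_pow A τ fun i => abs_lt.2 ⟨by linarith [(hτ i).1], (hτ i).2⟩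
  have hlim : ∑ i, A i * (1 - τ i)⁻¹ - ∑ i, A i * τ i ^ 0 = ∑ i, A i * (τ i / (1 - τ i)) := by
    rw [← sum_sub_distrib]
    refine sum_congr rfl fun i _ => ?_
    have hτ_ne : 1 - τ i ≠ 0 := by linarith [(hτ i).2]
    field_simp
    ring
  have hfejer := hρ.tendsto_sum_Icc_one_sub_div_smul
  simp only [smul_eq_mul, hlim] at hfejer
  refine (((hfejer.const_mul 2).const_add 1).const_mul (σh ^ 2)).congr' ?_
  filter_upwards [eventually_ne_atTop 0] with s hs
  have hs' : (s : ℝ) ≠ 0 := Nat.cast_ne_zero.2 hs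
  field_simp

theorem stmt4
    (σh : ℝ) (hσh : 0 ≤ σh) (m : ℕ) (hm : 1 ≤ m) (A τ : Fin m → ℝ)
    (hA : ∑ i, A i = 1) (hτ : ∀ i, 0 ≤ τ i ∧ τ i < 1) :
    Tendsto
      (fun s : ℕ => (s : ℝ) *
        (σh ^ 2 / s * (1 + 2 * ∑ k ∈ Finset.Icc 1 (s - 1),
          (1 - (k : ℝ) / s) * (∑ i, A i * τ i ^ k))))
      atTop (nhds (σh ^ 2 * (1 + 2 * ∑ i, A i * (τ i / (1 - τ i))))) :=
  stmt4_general σh m A τ hτ
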